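/- Reduction theorem: Let L be a finite lattice, L_f a sublattice of L, and f : L → L_f a function preserving arbitrary bounds. Let M be an mv-CGS over L and f(M) its reduction to L_f via f. Then for every state formula φ (resp. path formula γ) of mv-ATL* and every state q (resp. path λ): f([[φ]]_{M,q}) = [[φ]]_{f(M),q} (resp. f([[γ]]_{M,λ}) = [[γ]]_{f(M),λ}); equivalently, for every x ∈ L_f, [[φ]]_{f(M),q} = x if and only if [[φ]]_{M,q} ∈ f⁻¹(x). -/
import Mathlib


/-- A concurrent game structure (CGS): availability function `d` (with every
`d a q` nonempty) and a deterministic transition function `t`. -/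
structure CGS (Agt St Act : Type*) where
  d : Agt → St → Set Act
  d_nonempty : ∀ a q, (d a q).Nonempty
  t : St → (Agt → Act) → St

namespace CGS

variable {Agt St Act : Type*}

/-- An action profile `α` is available at state `q`. -/
def Avail (G : CGS Agt St Act) (q : St) (α : Agt → Act) : Prop :=
  ∀ a, α a ∈ G.d a q

/-- `lam` is a path of `G`: each step is realized by some available profile. -/
def IsPath (G : CGS Agt St Act) (lam : ℕ → St) : Prop :=
  ∀ i, ∃ α, G.Avail (lam i) α ∧ G.t (lam i) α = lam (i + 1)

/-- A perfect-recall strategy for agent `a`: a choice of an available action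
for every nonempty finite history, represented as (proper prefix, last state). -/
structure PRStrategy (G : CGS Agt St Act) (a : Agt) where
  act : List St → St → Act
  avail : ∀ h q, act h q ∈ G.d a q

/-- A collective perfect-recall strategy for the coalition `A`. -/
def PRColl (G : CGS Agt St Act) (A : Set Agt) := (a : A) → PRStrategy G (a : Agt)

/-- The outcome set of a collective perfect-recall strategy `s` from state `q`:
all paths starting at `q` consistent with `s`. -/
def prOut (G : CGS Agt St Act) {A : Set Agt} (q : St) (s : PRColl G A) : Set (ℕ → St) :=
  { lam | lam 0 = q ∧ ∀ i, ∃ α, G.Avail (lam i) α ∧ G.t (lam i) α = lam (i + 1) ∧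
      ∀ a : A, α (a : Agt) = (s a).act (List.ofFn fun j : Fin i => lam j) (lam i) }

end CGS

mutual
/-- State formulas of mv-ATL*. -/
inductive SForm (AP C Agt : Type) : Type
  | const : C → SForm AP C Agt
  | atom  : AP → SForm AP C Agt
  | and   : SForm AP C Agt → SForm AP C Agt → SForm AP C Agt
  | or    : SForm AP C Agt → SForm AP C Agt → SForm AP C Agt
  | coop  : Set Agt → PForm AP C Agt → SForm AP C Agt
  | nec   : Set Agt → PForm AP C Agt → SForm AP C Agt
/-- Path formulas of mv-ATL*. -/
inductive PForm (AP C Agt : Type) : Type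
  | state : SForm AP C Agt → PForm AP C Agt
  | and   : PForm AP C Agt → PForm AP C Agt → PForm AP C Agt
  | or    : PForm AP C Agt → PForm AP C Agt → PForm AP C Agt
  | next  : PForm AP C Agt → PForm AP C Agt
  | untl  : PForm AP C Agt → PForm AP C Agt → PForm AP C Agt
  | wuntl : PForm AP C Agt → PForm AP C Agt → PForm AP C Agt
end

variable {Agt St Act AP C : Type} {L : Type*} [CompleteLattice L]

mutual
/-- Multi-valued truth value of a state formula at a state. -/
noncomputable def sval (G : CGS Agt St Act) (σ : C → L) (V : AP → St → L) :
    SForm AP C Agt → St → L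
  | .const c, _ => σ c
  | .atom p, q => V p q
  | .and φ ψ, q => sval G σ V φ q ⊓ sval G σ V ψ q
  | .or φ ψ, q => sval G σ V φ q ⊔ sval G σ V ψ q
  | .coop A γ, q => ⨆ s : CGS.PRColl G A, ⨅ lam ∈ CGS.prOut G q s, pval G σ V γ lam
  | .nec A γ, q => ⨅ s : CGS.PRColl G A, ⨆ lam ∈ CGS.prOut G q s, pval G σ V γ lam

/-- Multi-valued truth value of a path formula on a path. -/
noncomputable def pval (G : CGS Agt St Act) (σ : C → L) (V : AP → St → L) :
    PForm AP C Agt → (ℕ → St) → L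
  | .state φ, lam => sval G σ V φ (lam 0)
  | .and γ δ, lam => pval G σ V γ lam ⊓ pval G σ V δ lam
  | .or γ δ, lam => pval G σ V γ lam ⊔ pval G σ V δ lam
  | .next γ, lam => pval G σ V γ (fun k => lam (k + 1))
  | .untl γ δ, lam =>
      ⨆ i : ℕ, (pval G σ V δ (fun k => lam (k + i)) ⊓
        ⨅ j : Fin i, pval G σ V γ (fun k => lam (k + (j : ℕ))))
  | .wuntl γ δ, lam =>
      (⨅ i : ℕ, pval G σ V γ (fun k => lam (k + i))) ⊔
      ⨆ i : ℕ, (pval G σ V δ (fun k => lam (k + i)) ⊓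
        ⨅ j : Fin i, pval G σ V γ (fun k => lam (k + (j : ℕ))))
end

/-- A function between complete lattices preserves arbitrary bounds if it
commutes with arbitrary suprema and infima. -/
def PreservesBounds {L L' : Type*} [CompleteLattice L] [CompleteLattice L'] (f : L → L') : Prop :=
  (∀ S : Set L, f (sSup S) = sSup (f '' S)) ∧ (∀ S : Set L, f (sInf S) = sInf (f '' S))


section Aux
variable {L L' : Type*} [CompleteLattice L] [CompleteLattice L'] {f : L → L'}

theorem pb_iSup (hf : PreservesBounds f) {ι : Sort*} (g : ι → L) :
    f (⨆ i, g i) = ⨆ i, f (g i) := by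
  rw [iSup, hf.1, ← Set.range_comp]; rfl

theorem pb_iInf (hf : PreservesBounds f) {ι : Sort*} (g : ι → L) :
    f (⨅ i, g i) = ⨅ i, f (g i) := by
  rw [iInf, hf.2, ← Set.range_comp]; rfl

theorem pb_sup (hf : PreservesBounds f) (a b : L) : f (a ⊔ b) = f a ⊔ f b := by
  have := hf.1 {a, b}
  simpa [Set.image_pair] using this

theorem pb_inf (hf : PreservesBounds f) (a b : L) : f (a ⊓ b) = f a ⊓ f b := by
  have := hf.2 {a, b}
  simpa [Set.image_pair] using this

end Aux

section Mut
variable {L L' : Type*} [CompleteLattice L] [CompleteLattice L']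
variable {Agt St Act AP C : Type}

mutual
theorem auxS (f : L → L') (hf : PreservesBounds f) (G : CGS Agt St Act)
    (σ : C → L) (V : AP → St → L) (φ : SForm AP C Agt) (q : St) :
    f (sval G σ V φ q) = sval G (fun c => f (σ c)) (fun p q' => f (V p q')) φ q := by
  cases φ with
  | const c => rfl
  | atom p => rfl
  | and φ ψ => simp only [sval, pb_inf hf, auxS f hf G σ V φ q, auxS f hf G σ V ψ q]
  | or φ ψ => simp only [sval, pb_sup hf, auxS f hf G σ V φ q, auxS f hf G σ V ψ q]
  | coop A γ =>
    simp only [sval, pb_iSup hf, pb_iInf hf]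
    congr 1; funext s; congr 1; funext lam; congr 1; funext _
    exact auxP f hf G σ V γ lam
  | nec A γ =>
    simp only [sval, pb_iSup hf, pb_iInf hf]
    congr 1; funext s; congr 1; funext lam; congr 1; funext _
    exact auxP f hf G σ V γ lam

theorem auxP (f : L → L') (hf : PreservesBounds f) (G : CGS Agt St Act)
    (σ : C → L) (V : AP → St → L) (γ : PForm AP C Agt) (lam : ℕ → St) :
    f (pval G σ V γ lam) = pval G (fun c => f (σ c)) (fun p q' => f (V p q')) γ lam := by
  cases γ with
  | state φ => exact auxS f hf G σ V φ (lam 0)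
  | and γ δ => simp only [pval, pb_inf hf, auxP f hf G σ V γ lam, auxP f hf G σ V δ lam]
  | or γ δ => simp only [pval, pb_sup hf, auxP f hf G σ V γ lam, auxP f hf G σ V δ lam]
  | next γ => simp only [pval]; exact auxP f hf G σ V γ _
  | untl γ δ =>
    simp only [pval, pb_iSup hf, pb_iInf hf, pb_inf hf]
    congr 1; funext i; rw [auxP f hf G σ V δ _]
    exact congrArg _ (iInf_congr fun j => auxP f hf G σ V γ _)
  | wuntl γ δ =>
    simp only [pval, pb_iSup hf, pb_iInf hf, pb_inf hf, pb_sup hf]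
    congr 1
    · congr 1; funext i; exact auxP f hf G σ V γ _
    · congr 1; funext i; rw [auxP f hf G σ V δ _]
      exact congrArg _ (iInf_congr fun j => auxP f hf G σ V γ _)
end

end Mut

/-- Reduction theorem: if `f` preserves arbitrary bounds, then the value of any
mv-ATL* formula in the reduced model `f(M)` (same CGS, interpretation `f ∘ σ`,
valuation `f ∘ V`) is the image under `f` of its value in `M`; equivalently,
`[[φ]]_{f(M),ξ} = x` iff `[[φ]]_{M,ξ} ∈ f⁻¹(x)`. -/
theorem stmt_12 {L L' : Type*} [CompleteLattice L] [Fintype L] [CompleteLattice L'] [Fintype L']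
    (f : L → L') (hf : PreservesBounds f)
    {Agt St Act AP C : Type} [Fintype Agt] [Fintype St] [Fintype Act]
    [Nonempty Agt] [Nonempty St] [Nonempty Act]
    (G : CGS Agt St Act) (σ : C → L) (V : AP → St → L) :
    (∀ (φ : SForm AP C Agt) (q : St),
      f (sval G σ V φ q) = sval G (fun c => f (σ c)) (fun p q' => f (V p q')) φ q) ∧
    (∀ (γ : PForm AP C Agt) (lam : ℕ → St), G.IsPath lam →
      f (pval G σ V γ lam) = pval G (fun c => f (σ c)) (fun p q' => f (V p q')) γ lam) := by
  exact ⟨fun φ q => auxS f hf G σ V φ q, fun γ lam _ => auxP f hf G σ V γ lam⟩
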